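/- (Stability of the Sylvester solution under perturbation.) Fix X ∈ ℝ^{d×n} and λ > 0. For Y ∈ ℝ^{k×n}, let W(Y) denote the unique solution of (YYᵀ + λI)W + W(XXᵀ) = 2YXᵀ. Then for any Y and perturbation ΔY, the solutions W = W(Y) and Ŵ = W(Y + ΔY) satisfy ‖Ŵ − W‖_F ≤ (1/λ)[ 2‖ΔY‖_F‖X‖_F + (‖ΔY‖_F² + 2‖Y‖_F‖ΔY‖_F)‖W‖_F ]. In particular, ‖Ŵ − W‖_F → 0 as ‖ΔY‖_F → 0. -/

import Mathlib

/-!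
Subtracting the two Sylvester equations shows that `D = Ŵ - W` solves
`(Ŷ Ŷᵀ + λ I) D + D (X Xᵀ) = 2 ΔY Xᵀ - (Ŷ Ŷᵀ - Y Yᵀ) W` with `Ŷ = Y + ΔY`.
Pairing this with `D` in the trace inner product, both `Ŷ Ŷᵀ` and `X Xᵀ` contribute nonnegatively,
so `λ ‖D‖² ≤ ⟪D, K⟫ ≤ ‖D‖ ‖K‖` with `K` the right-hand side, and `‖K‖` is estimated by
submultiplicativity of the Frobenius norm.
-/

open Matrix

/-- The Frobenius norm of a real matrix. -/
noncomputable def frob {k d : ℕ} (A : Matrix (Fin k) (Fin d) ℝ) : ℝ :=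
  Real.sqrt (∑ i, ∑ j, (A i j) ^ 2)

attribute [local instance] Matrix.frobeniusNormedAddCommGroup Matrix.frobeniusNormedSpace

namespace Matrix

variable {m n : Type*} [Fintype m] [Fintype n]

def toFrobeniusLp (A : Matrix m n ℝ) : PiLp 2 fun _ : m ↦ EuclideanSpace ℝ n :=
  WithLp.toLp 2 fun i ↦ WithLp.toLp 2 (A i)

theorem norm_toFrobeniusLp (A : Matrix m n ℝ) : ‖toFrobeniusLp A‖ = ‖A‖ := rfl

theorem inner_toFrobeniusLp (A B : Matrix m n ℝ) :
    inner ℝ (toFrobeniusLp A) (toFrobeniusLp B) = trace (Aᵀ * B) := by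
  simp [toFrobeniusLp, PiLp.inner_apply, trace, mul_apply, Finset.sum_comm (γ := m), mul_comm]

theorem frobenius_norm_sq_eq_trace (A : Matrix m n ℝ) : ‖A‖ ^ 2 = trace (Aᵀ * A) := by
  rw [← inner_toFrobeniusLp, real_inner_self_eq_norm_sq, norm_toFrobeniusLp]

theorem trace_transpose_mul_le (A B : Matrix m n ℝ) : trace (Aᵀ * B) ≤ ‖A‖ * ‖B‖ := by
  rw [← inner_toFrobeniusLp]
  exact real_inner_le_norm _ _

theorem mul_frobenius_norm_sq_le_trace_sylvester [DecidableEq m] {A : Matrix m m ℝ}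
    {B : Matrix n n ℝ} (hA : A.PosSemidef) (hB : B.PosSemidef) (c : ℝ) (D : Matrix m n ℝ) :
    c * ‖D‖ ^ 2 ≤ trace (Dᵀ * ((A + c • 1) * D + D * B)) := by
  have hDAD : 0 ≤ trace (Dᵀ * A * D) := by
    simpa using (hA.conjTranspose_mul_mul_same D).trace_nonneg
  have hDBD : 0 ≤ trace (D * B * Dᵀ) := by
    simpa using (hB.mul_mul_conjTranspose_same D).trace_nonneg
  have hcycle : trace (Dᵀ * (D * B)) = trace (D * B * Dᵀ) := trace_mul_comm _ _
  rw [frobenius_norm_sq_eq_trace, Matrix.mul_add, Matrix.add_mul, Matrix.mul_add, trace_add,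
    trace_add, hcycle, smul_mul, Matrix.one_mul, Matrix.mul_smul, trace_smul, smul_eq_mul,
    ← Matrix.mul_assoc]
  linarith

theorem mul_frobenius_norm_le_of_sylvester [DecidableEq m] {A : Matrix m m ℝ} {B : Matrix n n ℝ}
    (hA : A.PosSemidef) (hB : B.PosSemidef) {c : ℝ} {D K : Matrix m n ℝ}
    (h : (A + c • 1) * D + D * B = K) : c * ‖D‖ ≤ ‖K‖ := by
  rcases (norm_nonneg D).eq_or_lt with hD | hD
  · rw [← hD, mul_zero]
    exact norm_nonneg K
  · refine le_of_mul_le_mul_right ?_ hD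
    calc c * ‖D‖ * ‖D‖ = c * ‖D‖ ^ 2 := by ring
      _ ≤ trace (Dᵀ * K) := h ▸ mul_frobenius_norm_sq_le_trace_sylvester hA hB c D
      _ ≤ ‖D‖ * ‖K‖ := trace_transpose_mul_le D K
      _ = ‖K‖ * ‖D‖ := mul_comm _ _

theorem sylvester_sub {M M' : Matrix m m ℝ} {B : Matrix n n ℝ} {W W' C C' : Matrix m n ℝ}
    (h : M * W + W * B = C) (h' : M' * W' + W' * B = C') :
    M' * (W' - W) + (W' - W) * B = C' - C - (M' - M) * W := by
  rw [← h, ← h', Matrix.mul_sub, Matrix.sub_mul, Matrix.sub_mul]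
  abel

theorem frobenius_norm_mul_transpose_add_sub_le (Y Δ : Matrix m n ℝ) :
    ‖(Y + Δ) * (Y + Δ)ᵀ - Y * Yᵀ‖ ≤ ‖Δ‖ ^ 2 + 2 * ‖Y‖ * ‖Δ‖ := by
  have hexpand : (Y + Δ) * (Y + Δ)ᵀ - Y * Yᵀ = Δ * Δᵀ + Y * Δᵀ + Δ * Yᵀ := by
    rw [transpose_add, Matrix.add_mul, Matrix.mul_add, Matrix.mul_add]
    abel
  calc ‖(Y + Δ) * (Y + Δ)ᵀ - Y * Yᵀ‖ ≤ ‖Δ * Δᵀ‖ + ‖Y * Δᵀ‖ + ‖Δ * Yᵀ‖ := by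
        rw [hexpand]
        exact norm_add₃_le
    _ ≤ ‖Δ‖ * ‖Δᵀ‖ + ‖Y‖ * ‖Δᵀ‖ + ‖Δ‖ * ‖Yᵀ‖ := by
        gcongr <;> exact frobenius_norm_mul _ _
    _ = ‖Δ‖ ^ 2 + 2 * ‖Y‖ * ‖Δ‖ := by
        rw [frobenius_norm_transpose, frobenius_norm_transpose]
        ring

theorem posSemidef_mul_transpose_self (A : Matrix m n ℝ) : (A * Aᵀ).PosSemidef := by
  simpa using posSemidef_self_mul_conjTranspose A

end Matrix

theorem frob_eq_norm {k d : ℕ} (A : Matrix (Fin k) (Fin d) ℝ) : frob A = ‖A‖ := by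
  rw [frob, frobenius_norm_def, Real.sqrt_eq_rpow]
  simp

/-- Stability of the Sylvester solution under perturbation of Y:
if W solves the equation for Y and Ŵ solves it for Y + ΔY, then
‖Ŵ − W‖_F ≤ (1/λ)[2‖ΔY‖_F‖X‖_F + (‖ΔY‖_F² + 2‖Y‖_F‖ΔY‖_F)‖W‖_F]. -/
theorem stmt_11 (k d n : ℕ) (X : Matrix (Fin d) (Fin n) ℝ) (lam : ℝ) (hlam : 0 < lam)
    (Y ΔY : Matrix (Fin k) (Fin n) ℝ) (W What : Matrix (Fin k) (Fin d) ℝ)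
    (hW : (Y * Yᵀ + lam • (1 : Matrix (Fin k) (Fin k) ℝ)) * W + W * (X * Xᵀ) =
      (2 : ℝ) • (Y * Xᵀ))
    (hWhat : ((Y + ΔY) * (Y + ΔY)ᵀ + lam • (1 : Matrix (Fin k) (Fin k) ℝ)) * What +
      What * (X * Xᵀ) = (2 : ℝ) • ((Y + ΔY) * Xᵀ)) :
    frob (What - W) ≤
      (1 / lam) * (2 * frob ΔY * frob X + (frob ΔY ^ 2 + 2 * frob Y * frob ΔY) * frob W) := by
  simp only [frob_eq_norm]
  have hD : ((Y + ΔY) * (Y + ΔY)ᵀ + lam • 1) * (What - W) + (What - W) * (X * Xᵀ) =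
      (2 : ℝ) • (ΔY * Xᵀ) - ((Y + ΔY) * (Y + ΔY)ᵀ - Y * Yᵀ) * W := by
    have h := sylvester_sub hW hWhat
    rwa [add_sub_add_right_eq_sub, ← smul_sub, Matrix.add_mul Y ΔY Xᵀ, add_sub_cancel_left] at h
  have hlamD := mul_frobenius_norm_le_of_sylvester (posSemidef_mul_transpose_self (Y + ΔY))
    (posSemidef_mul_transpose_self X) hD
  have hK : ‖(2 : ℝ) • (ΔY * Xᵀ) - ((Y + ΔY) * (Y + ΔY)ᵀ - Y * Yᵀ) * W‖ ≤
      2 * ‖ΔY‖ * ‖X‖ + (‖ΔY‖ ^ 2 + 2 * ‖Y‖ * ‖ΔY‖) * ‖W‖ :=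
    calc _ ≤ ‖(2 : ℝ) • (ΔY * Xᵀ)‖ + ‖((Y + ΔY) * (Y + ΔY)ᵀ - Y * Yᵀ) * W‖ := norm_sub_le _ _
      _ ≤ 2 * (‖ΔY‖ * ‖Xᵀ‖) + ‖(Y + ΔY) * (Y + ΔY)ᵀ - Y * Yᵀ‖ * ‖W‖ := by
          rw [norm_smul, Real.norm_two]
          gcongr <;> exact frobenius_norm_mul _ _
      _ ≤ _ := by
          rw [frobenius_norm_transpose, ← mul_assoc]
          gcongr
          exact frobenius_norm_mul_transpose_add_sub_le Y ΔY
  rw [one_div, le_inv_mul_iff₀ hlam]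
  exact hlamD.trans hK
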